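/- In the construction R' = [[R, −2],[δ, R_S]], C' = [[C, δ],[−2, C_S]]: if the column player's strategy y in an ε'-WNE (with ε' < 2ε/3, ε ≤ δ ≤ 1/2) puts positive total mass y_L on the first N coordinates, then y_L > 2/3; symmetrically for the row player's mass x_L on the first N coordinates. -/

import Mathlib

open Finset

def InSimplex {I : Type*} [Fintype I] (x : I → ℝ) : Prop :=
  (∀ i, 0 ≤ x i) ∧ ∑ i, x i = 1

def IsWNE {I : Type*} [Fintype I] (R C : Matrix I I ℝ) (ε : ℝ)
    (x y : I → ℝ) : Prop :=
  (∀ i, 0 < x i → ∀ k, (∑ j, R k j * y j) - ε ≤ ∑ j, R i j * y j) ∧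
  (∀ j, 0 < y j → ∀ k, (∑ i, x i * C i k) - ε ≤ ∑ i, x i * C i j)

def combR {N K : ℕ} (R : Matrix (Fin N) (Fin N) ℝ)
    (RS : Matrix (Fin K) (Fin K) ℝ) (δ : ℝ) :
    Matrix (Fin N ⊕ Fin K) (Fin N ⊕ Fin K) ℝ := fun i j =>
  match i, j with
  | .inl a, .inl b => R a b
  | .inl _, .inr _ => -2
  | .inr _, .inl _ => δ
  | .inr a, .inr b => RS a b

def combC {N K : ℕ} (C : Matrix (Fin N) (Fin N) ℝ)
    (CS : Matrix (Fin K) (Fin K) ℝ) (δ : ℝ) :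
    Matrix (Fin N ⊕ Fin K) (Fin N ⊕ Fin K) ℝ := fun i j =>
  match i, j with
  | .inl a, .inl b => C a b
  | .inl _, .inr _ => δ
  | .inr _, .inl _ => -2
  | .inr a, .inr b => CS a b

open scoped Matrix

namespace InSimplex

theorem of_nonneg_div_sum {ι : Type*} [Fintype ι] {v : ι → ℝ} (hv : ∀ i, 0 ≤ v i)
    (hpos : 0 < ∑ i, v i) : InSimplex fun i => v i / ∑ i, v i :=
  ⟨fun i => div_nonneg (hv i) hpos.le, by rw [← Finset.sum_div, div_self hpos.ne']⟩

theorem sum_inl_add_sum_inr {ι κ : Type*} [Fintype ι] [Fintype κ] {x : ι ⊕ κ → ℝ}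
    (hx : InSimplex x) : ∑ a, x (Sum.inl a) + ∑ b, x (Sum.inr b) = 1 := by
  rw [← Fintype.sum_sum_type]; exact hx.2

end InSimplex

theorem IsWNE.swap {I : Type*} [Fintype I] {R C : Matrix I I ℝ} {ε : ℝ} {x y : I → ℝ}
    (h : IsWNE R C ε x y) : IsWNE Cᵀ Rᵀ ε y x := by
  simp only [IsWNE, Matrix.transpose_apply]
  exact ⟨fun j hj k => by simpa only [mul_comm (x _)] using h.2 j hj k,
    fun i hi k => by simpa only [mul_comm (y _)] using h.1 i hi k⟩

theorem exists_half_sum_le_sum_mul {ι : Type*} [Fintype ι] {S : Matrix ι ι ℝ}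
    (hS : ∀ y : ι → ℝ, InSimplex y → ∃ i, (1:ℝ)/2 ≤ ∑ j, S i j * y j)
    {v : ι → ℝ} (hv : ∀ i, 0 ≤ v i) (hpos : 0 < ∑ i, v i) :
    ∃ i, (∑ j, v j) / 2 ≤ ∑ j, S i j * v j := by
  obtain ⟨i, hi⟩ := hS _ (InSimplex.of_nonneg_div_sum hv hpos)
  refine ⟨i, ?_⟩
  simp only [mul_div_assoc', ← Finset.sum_div, le_div_iff₀ hpos] at hi
  linarith

theorem combC_eq_transpose_combR {N K : ℕ} (C : Matrix (Fin N) (Fin N) ℝ)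
    (CS : Matrix (Fin K) (Fin K) ℝ) (δ : ℝ) : combC C CS δ = (combR Cᵀ CSᵀ δ)ᵀ := by
  ext (i | i) (j | j) <;> rfl

section combR

variable {N K : ℕ} (R : Matrix (Fin N) (Fin N) ℝ) (RS : Matrix (Fin K) (Fin K) ℝ) (δ : ℝ)
  (y : Fin N ⊕ Fin K → ℝ)

theorem sum_combR_inl_mul (a : Fin N) :
    ∑ j, combR R RS δ (Sum.inl a) j * y j =
      ∑ b, R a b * y (Sum.inl b) - 2 * ∑ b, y (Sum.inr b) := by
  simp [Fintype.sum_sum_type, combR, Finset.mul_sum, sub_eq_add_neg]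

theorem sum_combR_inr_mul (i : Fin K) :
    ∑ j, combR R RS δ (Sum.inr i) j * y j =
      δ * ∑ b, y (Sum.inl b) + ∑ b, RS i b * y (Sum.inr b) := by
  simp [Fintype.sum_sum_type, combR, Finset.mul_sum]

end combR

/-- Against `y`, every row of the top block earns at most `3 y_L - 2`, while some row of the bottom
block earns at least `δ`; so a top row can be an `ε'`-best response only if `y_L > 2/3`. -/
theorem two_thirds_lt_sum_inl_of_isWNE_combR {N K : ℕ} {R : Matrix (Fin N) (Fin N) ℝ}
    {RS : Matrix (Fin K) (Fin K) ℝ} {C' : Matrix (Fin N ⊕ Fin K) (Fin N ⊕ Fin K) ℝ}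
    {δ ε' : ℝ} (hR : ∀ a b, R a b ≤ 1)
    (hRS : ∀ y : Fin K → ℝ, InSimplex y → ∃ i, (1:ℝ)/2 ≤ ∑ j, RS i j * y j)
    (hδ : δ ≤ 1/2) (hε' : ε' < δ) {x y : Fin N ⊕ Fin K → ℝ} (hy : InSimplex y)
    (h : IsWNE (combR R RS δ) C' ε' x y) (hx : 0 < ∑ a, x (Sum.inl a)) :
    2/3 < ∑ b, y (Sum.inl b) := by
  obtain ⟨a, -, ha⟩ := Finset.exists_lt_of_sum_lt (f := 0) (g := fun a => x (Sum.inl a))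
    (by simpa using hx)
  have hsum := hy.sum_inl_add_sum_inr
  have htop : ∑ j, combR R RS δ (Sum.inl a) j * y j ≤
      ∑ b, y (Sum.inl b) - 2 * ∑ b, y (Sum.inr b) := by
    rw [sum_combR_inl_mul]
    gcongr with b
    exact mul_le_of_le_one_left (hy.1 _) (hR a b)
  rcases (Finset.sum_nonneg fun b _ => hy.1 (Sum.inr b)).eq_or_lt with hyR | hyR
  · linarith
  obtain ⟨i, hi⟩ := exists_half_sum_le_sum_mul hRS (fun b => hy.1 (Sum.inr b)) hyR
  have hbottom : δ ≤ ∑ j, combR R RS δ (Sum.inr i) j * y j := by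
    rw [sum_combR_inr_mul]
    nlinarith
  linarith [h.1 _ ha (Sum.inr i)]

theorem combined_game_mass_dichotomy_general {N K : ℕ}
    (R C : Matrix (Fin N) (Fin N) ℝ) (RS CS : Matrix (Fin K) (Fin K) ℝ)
    (ε δ : ℝ) (hεδ : ε ≤ δ) (hδ : δ ≤ 1/2) (hε : 0 < ε)
    (hR : ∀ i j, R i j ∈ Set.Icc (-1:ℝ) 1) (hC : ∀ i j, C i j ∈ Set.Icc (-1:ℝ) 1)
    (hgoodR : ∀ y : Fin K → ℝ, InSimplex y → ∃ i, (1:ℝ)/2 ≤ ∑ j, RS i j * y j)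
    (hgoodC : ∀ x : Fin K → ℝ, InSimplex x → ∃ j, (1:ℝ)/2 ≤ ∑ i, x i * CS i j)
    (ε' : ℝ) (hε' : ε' < 2 * ε / 3)
    (x y : Fin N ⊕ Fin K → ℝ) (hx : InSimplex x) (hy : InSimplex y)
    (h : IsWNE (combR R RS δ) (combC C CS δ) ε' x y) :
    (0 < (∑ a : Fin N, y (Sum.inl a)) → 2/3 < ∑ a : Fin N, y (Sum.inl a)) ∧
    (0 < (∑ a : Fin N, x (Sum.inl a)) → 2/3 < ∑ a : Fin N, x (Sum.inl a)) := by
  have hε'δ : ε' < δ := by linarith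
  have hyL : 0 < ∑ a, x (Sum.inl a) → 2/3 < ∑ a, y (Sum.inl a) :=
    two_thirds_lt_sum_inl_of_isWNE_combR (fun a b => (hR a b).2) hgoodR hδ hε'δ hy h
  have hxL : 0 < ∑ a, y (Sum.inl a) → 2/3 < ∑ a, x (Sum.inl a) := by
    refine two_thirds_lt_sum_inl_of_isWNE_combR (R := Cᵀ) (RS := CSᵀ) (C' := (combR R RS δ)ᵀ)
      (fun a b => (hC b a).2) (fun v hv => ?_) hδ hε'δ hx ?_
    · simpa only [Matrix.transpose_apply, mul_comm] using hgoodC v hv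
    · simpa only [combC_eq_transpose_combR, Matrix.transpose_transpose] using h.swap
  exact ⟨fun hpos => hyL (by linarith [hxL hpos]), fun hpos => hxL (by linarith [hyL hpos])⟩

/-- in an ε'-WNE of the combined game (ε' < 2ε/3, ε ≤ δ ≤ 1/2),
if a player puts positive mass on the first N coordinates, that mass
exceeds 2/3. -/
theorem combined_game_mass_dichotomy {N K : ℕ}
    (R C : Matrix (Fin N) (Fin N) ℝ) (RS CS : Matrix (Fin K) (Fin K) ℝ)
    (ε δ : ℝ) (hεδ : ε ≤ δ) (hδ : δ ≤ 1/2) (hε : 0 < ε)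
    (hR : ∀ i j, R i j ∈ Set.Icc (-1:ℝ) 1) (hC : ∀ i j, C i j ∈ Set.Icc (-1:ℝ) 1)
    (hRS : ∀ i j, RS i j ∈ Set.Icc (-1:ℝ) 1) (hCS : ∀ i j, CS i j ∈ Set.Icc (-1:ℝ) 1)
    (hgoodR : ∀ y : Fin K → ℝ, InSimplex y → ∃ i, (1:ℝ)/2 ≤ ∑ j, RS i j * y j)
    (hgoodC : ∀ x : Fin K → ℝ, InSimplex x → ∃ j, (1:ℝ)/2 ≤ ∑ i, x i * CS i j)
    (ε' : ℝ) (hε'0 : 0 ≤ ε') (hε' : ε' < 2 * ε / 3)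
    (x y : Fin N ⊕ Fin K → ℝ) (hx : InSimplex x) (hy : InSimplex y)
    (h : IsWNE (combR R RS δ) (combC C CS δ) ε' x y) :
    (0 < (∑ a : Fin N, y (Sum.inl a)) → 2/3 < ∑ a : Fin N, y (Sum.inl a)) ∧
    (0 < (∑ a : Fin N, x (Sum.inl a)) → 2/3 < ∑ a : Fin N, x (Sum.inl a)) :=
  combined_game_mass_dichotomy_general R C RS CS ε δ hεδ hδ hε hR hC hgoodR hgoodC ε' hε' x y hx hy
    h
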